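/- arXiv:1308.2507 — 5 statements merged into one kernel-verified Lean document; each statement's English description precedes it below -/
import Mathlib

section
/- In any separation algebra Σ, footprint addition ∘ is well-defined: for all σ1, σ2, σ1', σ2' ∈ Σ with δ(σ1) = δ(σ1') and δ(σ2) = δ(σ2'), the product σ1 * σ2 is defined if and only if σ1' * σ2' is defined, and when both are defined, δ(σ1 * σ2) = δ(σ1' * σ2'). -/
/-!
Two states have the same footprint iff they are compatible with the same states. By
associativity, `σ1 * σ2` is compatible with `τ` iff `σ2 * τ` is defined and compatible
with `σ1`, a condition that depends on `σ1` only through its footprint. So each factor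
of a product may be replaced by one of equal footprint, one factor at a time.
-/

/-- A separation algebra: a set with a partial commutative, associative,
cancellative operation `op` (partiality modelled via `Option`) and a unit. -/
structure SepAlg (α : Type*) where
  op : α → α → Option α
  unit : α
  comm : ∀ a b, op a b = op b a
  assoc : ∀ a b c, (op a b).bind (fun x => op x c) = (op b c).bind (fun y => op a y)
  unit_op : ∀ a, op unit a = some a
  cancel : ∀ a b c d, op a b = some d → op a c = some d → b = c

/-- The footprint of a state `σ`. -/
def foot {α : Type*} (SA : SepAlg α) (σ : α) : Set α :=
  {σ' | ∀ σ'', (SA.op σ' σ'').isSome ↔ (SA.op σ σ'').isSome}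

namespace SepAlg

variable {α : Type*} (SA : SepAlg α)

theorem foot_eq_foot_iff {a b : α} :
    foot SA a = foot SA b ↔ ∀ τ, (SA.op a τ).isSome ↔ (SA.op b τ).isSome := by
  constructor
  · intro h
    have ha : a ∈ foot SA a := fun _ => Iff.rfl
    rwa [h] at ha
  · intro h
    ext x
    exact forall_congr' fun τ => iff_congr Iff.rfl (h τ)

theorem isSome_op_iff_of_op_eq_some {a b c : α} (hc : SA.op a b = some c) (τ : α) :
    (SA.op c τ).isSome ↔ ((SA.op b τ).bind (SA.op a)).isSome := by
  have h := SA.assoc a b τ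
  rw [hc, Option.bind_some] at h
  rw [h]

theorem isSome_op_congr_left {a a' : α} (h : foot SA a = foot SA a') (b : α) :
    (SA.op a b).isSome ↔ (SA.op a' b).isSome :=
  (foot_eq_foot_iff SA).1 h b

theorem isSome_op_congr_right {b b' : α} (h : foot SA b = foot SA b') (a : α) :
    (SA.op a b).isSome ↔ (SA.op a b').isSome := by
  rw [SA.comm a b, SA.comm a b']
  exact isSome_op_congr_left SA h a

theorem foot_op_congr_left {a a' b c c' : α} (h : foot SA a = foot SA a')
    (hc : SA.op a b = some c) (hc' : SA.op a' b = some c') : foot SA c = foot SA c' := by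
  rw [foot_eq_foot_iff]
  intro τ
  rw [isSome_op_iff_of_op_eq_some SA hc, isSome_op_iff_of_op_eq_some SA hc']
  cases SA.op b τ with
  | none => rfl
  | some x => exact isSome_op_congr_left SA h x

theorem foot_op_congr_right {a b b' c c' : α} (h : foot SA b = foot SA b')
    (hc : SA.op a b = some c) (hc' : SA.op a b' = some c') : foot SA c = foot SA c' := by
  rw [SA.comm] at hc hc'
  exact foot_op_congr_left SA h hc hc'

end SepAlg

/-- footprint addition is well-defined: if `δ(σ1) = δ(σ1')` and
`δ(σ2) = δ(σ2')`, then `σ1 * σ2` is defined iff `σ1' * σ2'` is defined, and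
when both are defined the footprints of the results agree. -/
theorem fpAdd_well_defined {α : Type*} (SA : SepAlg α) (σ1 σ2 σ1' σ2' : α)
    (h1 : foot SA σ1 = foot SA σ1') (h2 : foot SA σ2 = foot SA σ2') :
    ((SA.op σ1 σ2).isSome ↔ (SA.op σ1' σ2').isSome) ∧
    (∀ σ12 σ12', SA.op σ1 σ2 = some σ12 → SA.op σ1' σ2' = some σ12' →
      foot SA σ12 = foot SA σ12') := by
  refine ⟨(SA.isSome_op_congr_left h1 σ2).trans (SA.isSome_op_congr_right h2 σ1'), ?_⟩
  intro σ12 σ12' h12 h12'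
  obtain ⟨τ, hτ⟩ : ∃ τ, SA.op σ1' σ2 = some τ :=
    Option.isSome_iff_exists.1 ((SA.isSome_op_congr_left h1 σ2).1 (by simp [h12]))
  exact (SA.foot_op_congr_left h1 h12 hτ).trans (SA.foot_op_congr_right h2 hτ h12')
end

section
/- In any separation algebra Σ whose operation * is cancellative on footprints, for all footprints l1, l2, l3 ∈ F(Σ): if l1 ∘ l2 is defined and l1 \\ l3 is defined, then (l1 ∘ l2) \\ l3 is defined and (l1 ∘ l2) \\ l3 = (l1 \\ l3) ∘ l2. -/
/-- The `*` operation is cancellative on footprints. -/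
def CancOnFoot {α : Type*} (SA : SepAlg α) : Prop :=
  ∀ σ1 σ2 σ1' σ2' σ σ', SA.op σ1 σ2 = some σ → SA.op σ1' σ2' = some σ' →
    foot SA σ = foot SA σ' → foot SA σ1 = foot SA σ1' → foot SA σ2 = foot SA σ2'

/-- `FpAdd SA l1 l2 l` means footprint addition `l1 ∘ l2` is defined with value `l`. -/
def FpAdd {α : Type*} (SA : SepAlg α) (l1 l2 l : Set α) : Prop :=
  ∃ σ1 σ2 σ, foot SA σ1 = l1 ∧ foot SA σ2 = l2 ∧ SA.op σ1 σ2 = some σ ∧ foot SA σ = l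

/-- `FpSub SA l1 l2 l` means footprint subtraction `l2 \\ l1` is defined with value `l`. -/
def FpSub {α : Type*} (SA : SepAlg α) (l1 l2 l : Set α) : Prop :=
  ∃ σ1 σ2 σ, foot SA σ1 = l1 ∧ foot SA σ2 = l2 ∧ SA.op σ1 σ = some σ2 ∧ foot SA σ = l

/-!
Pick representatives `σ1 * σ2 = σ` of `l1 ∘ l2` and `τ3 * τ = τ1` of `l1 \\ l3`, so that
`δ τ1 = δ σ1`. A footprint records exactly which states a state composes with, so `τ1 * σ2` is
defined and has the footprint of `σ1 * σ2`. Associativity rewrites `(τ3 * τ) * σ2` as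
`τ3 * (τ * σ2)`, exhibiting `δ (τ * σ2)` both as `(l1 ∘ l2) \\ l3` and as `(l1 \\ l3) ∘ l2`.
-/

section Footprint

variable {α : Type*} (SA : SepAlg α)

theorem mem_foot_self (a : α) : a ∈ foot SA a := fun _ => Iff.rfl

variable {SA}

theorem isSome_op_iff_of_foot_eq {a a' : α} (h : foot SA a = foot SA a') (x : α) :
    (SA.op a x).isSome ↔ (SA.op a' x).isSome :=
  (h ▸ mem_foot_self SA a : a ∈ foot SA a') x

theorem foot_eq_of_isSome_op_iff {a a' : α}
    (h : ∀ x, (SA.op a x).isSome ↔ (SA.op a' x).isSome) : foot SA a = foot SA a' :=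
  Set.ext fun _ => forall_congr' fun x => iff_congr Iff.rfl (h x)

theorem exists_op_eq_some_of_foot_eq {a a' b c : α} (h : foot SA a = foot SA a')
    (hc : SA.op a b = some c) : ∃ c', SA.op a' b = some c' :=
  Option.isSome_iff_exists.mp ((isSome_op_iff_of_foot_eq h b).mp (by simp [hc]))

theorem op_eq_bind_of_op_eq_some {a b c : α} (hc : SA.op a b = some c) (x : α) :
    SA.op c x = (SA.op b x).bind (SA.op a) := by
  simpa [hc] using SA.assoc a b x

theorem exists_op_op_of_op_eq_some {a b c x d : α} (hc : SA.op a b = some c)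
    (hd : SA.op c x = some d) : ∃ e, SA.op b x = some e ∧ SA.op a e = some d := by
  rwa [op_eq_bind_of_op_eq_some hc, Option.bind_eq_some_iff] at hd

theorem foot_op_congr_left {a a' b c c' : α} (h : foot SA a = foot SA a')
    (hc : SA.op a b = some c) (hc' : SA.op a' b = some c') : foot SA c = foot SA c' := by
  refine foot_eq_of_isSome_op_iff fun x => ?_
  rw [op_eq_bind_of_op_eq_some hc, op_eq_bind_of_op_eq_some hc']
  cases SA.op b x with
  | none => rfl
  | some y => exact isSome_op_iff_of_foot_eq h y

end Footprint

theorem fp_sub_of_add_general {α : Type*} (SA : SepAlg α)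
    (l1 l2 l3 l12 ld : Set α)
    (hadd : FpAdd SA l1 l2 l12) (hsub : FpSub SA l3 l1 ld) :
    ∃ l, FpSub SA l3 l12 l ∧ FpAdd SA ld l2 l := by
  obtain ⟨σ1, σ2, σ, hσ1, hσ2, hσ, hσl⟩ := hadd
  obtain ⟨τ3, τ1, τ, hτ3, hτ1, hτ, hτl⟩ := hsub
  have hfoot : foot SA τ1 = foot SA σ1 := hτ1.trans hσ1.symm
  obtain ⟨ρ, hρ⟩ := exists_op_eq_some_of_foot_eq hfoot.symm hσ
  obtain ⟨μ, hμ, hτ3μ⟩ := exists_op_op_of_op_eq_some hτ hρ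
  exact ⟨foot SA μ, ⟨τ3, ρ, μ, hτ3, (foot_op_congr_left hfoot hρ hσ).trans hσl, hτ3μ, rfl⟩,
    ⟨τ, σ2, μ, hτl, hσ2, hμ, rfl⟩⟩

/-- if `l1 ∘ l2` is defined (with value `l12`) and `l1 \\ l3` is
defined (with value `ld`), then `(l1 ∘ l2) \\ l3` is defined and equals
`(l1 \\ l3) ∘ l2`. -/
theorem fp_sub_of_add {α : Type*} (SA : SepAlg α) (hc : CancOnFoot SA)
    (l1 l2 l3 l12 ld : Set α)
    (hadd : FpAdd SA l1 l2 l12) (hsub : FpSub SA l3 l1 ld) :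
    ∃ l, FpSub SA l3 l12 l ∧ FpAdd SA ld l2 l :=
  fp_sub_of_add_general SA l1 l2 l3 l12 ld hadd hsub
end

section
/- In the separation algebra RAM_π, for every state σ the footprint δ(σ) is exactly the set of states σ' such that: dom σ' = dom σ; for every x with σ(x) = (u, π) and π < 1, also σ'(x) = (u, π); and for every x with σ(x) = (u, 1), σ'(x) = (u', 1) for some value u'. -/
/-- Permissions: real numbers in `(0, 1]`. -/
def Perm : Type := {p : ℝ // 0 < p ∧ p ≤ 1}

/-- `RAM_π`: finite partial functions from `Loc = {1,2,...}` (modelled as `ℕ+`)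
to `Val × Perm`, with `Val = ℤ`. -/
def RAMp : Type := { f : ℕ+ → Option (ℤ × Perm) // {x | f x ≠ none}.Finite }

open Classical in
/-- Pointwise combination of permission-carrying cells: when both sides are
defined they must agree on the value and their permissions must sum to at
most `1`, in which case the permissions are added. -/
noncomputable def pcomb (a b : Option (ℤ × Perm)) : Option (ℤ × Perm) :=
  match a, b with
  | none, b => b
  | some v, none => some v
  | some (u1, p1), some (u2, p2) =>
    if h : u1 = u2 ∧ p1.1 + p2.1 ≤ 1 then
      some (u1, ⟨p1.1 + p2.1, ⟨add_pos p1.2.1 p2.2.1, h.2⟩⟩)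
    else none

/-- Compatibility `σ1 ♯ σ2` of two states of `RAM_π`. -/
def rampCompat (σ1 σ2 : RAMp) : Prop :=
  ∀ x u1 p1 u2 p2, σ1.1 x = some (u1, p1) → σ2.1 x = some (u2, p2) →
    u1 = u2 ∧ p1.1 + p2.1 ≤ 1

lemma pcomb_finite (σ1 σ2 : RAMp) : {x | pcomb (σ1.1 x) (σ2.1 x) ≠ none}.Finite := by
  apply Set.Finite.subset (σ1.2.union σ2.2)
  intro x hx
  simp only [Set.mem_setOf_eq, Set.mem_union] at hx ⊢
  by_cases h1 : σ1.1 x = none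
  · right
    intro h2
    apply hx
    rw [h1, h2]
    rfl
  · left; exact h1

open Classical in
/-- The `*` operation of `RAM_π`: permission-combining union, undefined when
the two states are incompatible. -/
noncomputable def rampOp (σ1 σ2 : RAMp) : Option RAMp :=
  if rampCompat σ1 σ2 then
    some ⟨fun x => pcomb (σ1.1 x) (σ2.1 x), pcomb_finite σ1 σ2⟩
  else none

/-- The empty state `[]` of `RAM_π`. -/
def rampEmpty : RAMp := ⟨fun _ => none, by simp⟩

/-- The footprint of a state of `RAM_π`. -/
def footRamp (σ : RAMp) : Set RAMp :=
  {σ' | ∀ σ'', (rampOp σ' σ'').isSome ↔ (rampOp σ σ'').isSome}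

/-!
Compatibility of states is a pointwise condition on cells, and single-cell states test one cell
against an arbitrary frame cell, so `σ'` lies in the footprint of `σ` iff each cell of `σ'` admits
exactly the frame cells admitted by the corresponding cell of `σ`. A cell `(u, π)` admits the
frames `(v, q)` with `π + q ≤ 1` and, unless `π = 1`, `v = u`; so its admitted frames determine
`π` and, when `π < 1`, also `u`.
-/

def CellCompat : Option (ℤ × Perm) → Option (ℤ × Perm) → Prop
  | some (u₁, p₁), some (u₂, p₂) => u₁ = u₂ ∧ p₁.1 + p₂.1 ≤ 1
  | _, _ => True

@[simp]
lemma cellCompat_none_left (c : Option (ℤ × Perm)) : CellCompat none c := by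
  cases c <;> trivial

@[simp]
lemma cellCompat_none_right (c : Option (ℤ × Perm)) : CellCompat c none := by
  rcases c with _ | ⟨_, _⟩ <;> trivial

@[simp]
lemma cellCompat_some_some (u₁ u₂ : ℤ) (p₁ p₂ : Perm) :
    CellCompat (some (u₁, p₁)) (some (u₂, p₂)) ↔ u₁ = u₂ ∧ p₁.1 + p₂.1 ≤ 1 :=
  Iff.rfl

lemma exists_not_cellCompat_some (u : ℤ) (p : Perm) : ∃ c, ¬ CellCompat (some (u, p)) c :=
  ⟨some (u + 1, p), by simp⟩

lemma not_cellCompat_of_perm_eq_one {u : ℤ} {π : Perm} (hπ : π.1 = 1) (v : ℤ) (q : Perm) :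
    ¬ CellCompat (some (u, π)) (some (v, q)) := by
  have := q.2.1
  simp only [cellCompat_some_some, hπ, not_and]
  intro _
  linarith

def Perm.compl (p : Perm) (hp : p.1 < 1) : Perm :=
  ⟨1 - p.1, by constructor <;> linarith [p.2.1]⟩

@[simp]
lemma Perm.compl_val (p : Perm) (hp : p.1 < 1) : (p.compl hp).1 = 1 - p.1 :=
  rfl

lemma Perm.le_of_forall_add_le {p p' : Perm} (h : ∀ q : Perm, p'.1 + q.1 ≤ 1 → p.1 + q.1 ≤ 1) :
    p.1 ≤ p'.1 := by
  by_contra! hlt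
  have hq := h (p'.compl (hlt.trans_le p.2.2)) (by simp)
  simp only [Perm.compl_val] at hq
  linarith

lemma cellCompat_some_congr_iff (u u' : ℤ) (π π' : Perm) :
    (∀ c, CellCompat (some (u', π')) c ↔ CellCompat (some (u, π)) c) ↔
      π' = π ∧ (π.1 < 1 → u' = u) := by
  constructor
  · intro h
    -- frames carrying the value of one cell compare the permissions; the frame `1 - π` pins the value
    have hle : π'.1 ≤ π.1 := Perm.le_of_forall_add_le fun q hq ↦ ((h (some (u, q))).2 ⟨rfl, hq⟩).2
    have hge : π.1 ≤ π'.1 := Perm.le_of_forall_add_le fun q hq ↦ ((h (some (u', q))).1 ⟨rfl, hq⟩).2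
    refine ⟨Subtype.ext (le_antisymm hle hge), fun hlt ↦ ?_⟩
    exact ((h (some (u, π.compl hlt))).2 (by simp)).1
  · rintro ⟨rfl, hval⟩ (_ | ⟨v, q⟩)
    · simp
    rcases π'.2.2.lt_or_eq with hlt | heq
    · rw [hval hlt]
    · exact iff_of_false (not_cellCompat_of_perm_eq_one heq _ _)
        (not_cellCompat_of_perm_eq_one heq _ _)

lemma rampCompat_iff (σ τ : RAMp) : rampCompat σ τ ↔ ∀ x, CellCompat (σ.1 x) (τ.1 x) := by
  refine forall_congr' fun x ↦ ?_
  rcases σ.1 x with _ | ⟨u₁, p₁⟩ <;> rcases τ.1 x with _ | ⟨u₂, p₂⟩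
  · simp
  · simp
  · simp
  · exact ⟨fun h ↦ h _ _ _ _ rfl rfl, by rintro h _ _ _ _ ⟨⟩ ⟨⟩; exact h⟩

lemma rampOp_isSome_iff (σ τ : RAMp) : (rampOp σ τ).isSome ↔ rampCompat σ τ := by
  unfold rampOp
  split
  · exact iff_of_true rfl ‹_›
  · exact iff_of_false (by simp) ‹_›

def RAMp.single (x : ℕ+) (c : Option (ℤ × Perm)) : RAMp :=
  ⟨fun y ↦ if y = x then c else none,
    (Set.finite_singleton x).subset fun y hy ↦ by by_contra h; exact hy (if_neg h)⟩

lemma rampCompat_single_iff (σ : RAMp) (x : ℕ+) (c : Option (ℤ × Perm)) :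
    rampCompat σ (RAMp.single x c) ↔ CellCompat (σ.1 x) c := by
  rw [rampCompat_iff]
  refine ⟨fun h ↦ by simpa [RAMp.single] using h x, fun h y ↦ ?_⟩
  by_cases hy : y = x
  · subst hy
    simpa [RAMp.single] using h
  · simp [RAMp.single, hy]

lemma mem_footRamp_iff (σ σ' : RAMp) :
    σ' ∈ footRamp σ ↔ ∀ x c, CellCompat (σ'.1 x) c ↔ CellCompat (σ.1 x) c := by
  simp only [footRamp, Set.mem_ofPred_eq, rampOp_isSome_iff]
  refine ⟨fun h x c ↦ ?_, fun h τ ↦ ?_⟩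
  · simpa only [rampCompat_single_iff] using h (RAMp.single x c)
  · simp only [rampCompat_iff]
    exact forall_congr' fun x ↦ h x _

lemma cellCompat_congr_iff (a a' : Option (ℤ × Perm)) :
    (∀ c, CellCompat a' c ↔ CellCompat a c) ↔
      ((a ≠ none ↔ a' ≠ none) ∧ ∀ u, ∀ π : Perm, a = some (u, π) →
        (π.1 < 1 → a' = some (u, π)) ∧
        (π.1 = 1 → ∃ u', ∃ π' : Perm, a' = some (u', π') ∧ π'.1 = 1)) := by
  rcases a with _ | ⟨u, π⟩ <;> rcases a' with _ | ⟨u', π'⟩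
  · simp
  · obtain ⟨c, hc⟩ := exists_not_cellCompat_some u' π'
    simpa using ⟨c, hc⟩
  · obtain ⟨c, hc⟩ := exists_not_cellCompat_some u π
    simpa using ⟨c, hc⟩
  · rw [cellCompat_some_congr_iff]
    simp only [ne_eq, reduceCtorEq, not_false_eq_true, Option.some.injEq, Prod.mk.injEq,
      ↓existsAndEq, and_true, exists_and_right, true_and, and_imp, forall_apply_eq_imp_iff,
      forall_eq']
    rcases π.2.2.lt_or_eq with hlt | heq
    · simp [hlt, hlt.ne, and_comm]
    · have hext : π' = π ↔ π'.1 = π.1 := Subtype.ext_iff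
      simp [heq, hext]

/-- in `RAM_π`, the footprint of `σ` is exactly the set of states
`σ'` with the same domain as `σ` and the same permissions, agreeing with `σ`
on the value of every cell held with a read permission (`π < 1`). -/
theorem ramp_foot_description (σ : RAMp) :
    footRamp σ = {σ' |
      (∀ x, σ.1 x ≠ none ↔ σ'.1 x ≠ none) ∧
      ∀ x u, ∀ π : Perm, σ.1 x = some (u, π) →
        (π.1 < 1 → σ'.1 x = some (u, π)) ∧
        (π.1 = 1 → ∃ u', ∃ π' : Perm, σ'.1 x = some (u', π') ∧ π'.1 = 1)} := by
  ext σ'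
  simp only [mem_footRamp_iff, cellCompat_congr_iff, Set.mem_ofPred_eq, forall_and]
end

section
/- In the separation algebra RAM, footprint subtraction has the following explicit description: for σ1, σ2 ∈ RAM with l1 = δ(σ1) and l2 = δ(σ2), if dom σ1 ⊆ dom σ2 then l2 \\ l1 is defined and equals {σ ∈ RAM | dom σ is disjoint from dom σ1 and dom σ ∪ dom σ1 = dom σ2}, and if dom σ1 ⊄ dom σ2 then l2 \\ l1 is undefined. -/
/-- `RAM`: finite partial functions from `Loc = {1,2,...}` (modelled as `ℕ+`)
to `Val = ℤ`. -/
def RAM : Type := { f : ℕ+ → Option ℤ // {x | f x ≠ none}.Finite }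

/-- Union of two partial heaps (left-biased; used only on disjoint heaps). -/
def ramFun (σ1 σ2 : RAM) : ℕ+ → Option ℤ := fun x => (σ1.1 x).or (σ2.1 x)

lemma ramFun_finite (σ1 σ2 : RAM) : {x | ramFun σ1 σ2 x ≠ none}.Finite := by
  apply Set.Finite.subset (σ1.2.union σ2.2)
  intro x hx
  simp only [Set.mem_setOf_eq, ramFun, Set.mem_union] at hx ⊢
  by_cases h1 : σ1.1 x = none
  · right; simpa [h1] using hx
  · left; exact h1

open Classical in
/-- The `*` operation of `RAM`: disjoint union of heaps, undefined (`none`)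
when the domains overlap. -/
noncomputable def ramOp (σ1 σ2 : RAM) : Option RAM :=
  if ∀ x, σ1.1 x = none ∨ σ2.1 x = none then
    some ⟨ramFun σ1 σ2, ramFun_finite σ1 σ2⟩
  else none

/-- The empty heap `[]`. -/
def ramEmpty : RAM := ⟨fun _ => none, by simp⟩

/-- The footprint of a state of `RAM`. -/
def footRam (σ : RAM) : Set RAM :=
  {σ' | ∀ σ'', (ramOp σ' σ'').isSome ↔ (ramOp σ σ'').isSome}

/-- The domain of a state of `RAM`. -/
def ramDom (σ : RAM) : Set ℕ+ := {x | σ.1 x ≠ none}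

/-- `FpSubRam l1 l2 l` : footprint subtraction `l2 \\ l1` in `RAM` is defined
with value `l`. -/
def FpSubRam (l1 l2 l : Set RAM) : Prop :=
  ∃ σ1 σ2 σ, footRam σ1 = l1 ∧ footRam σ2 = l2 ∧ ramOp σ1 σ = some σ2 ∧ footRam σ = l

/-! Since `*` only asks that domains be disjoint, the footprint `δ(σ)` is the set of states
with the same domain as `σ` (singleton heaps detect each location). Hence `δ(σ2) \\ δ(σ1)`
is defined exactly when some splitting `σ2 = σ1' * σ` with `dom σ1' = dom σ1` exists, i.e. when
`dom σ1 ⊆ dom σ2` (restrict `σ2` to `dom σ1` and to its complement), and then every such `σ`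
has domain `dom σ2 \ dom σ1`. -/

lemma Set.inter_eq_empty_and_union_eq_iff_eq_sdiff {α : Type*} {s t u : Set α} (h : t ⊆ u) :
    s ∩ t = ∅ ∧ s ∪ t = u ↔ s = u \ t := by
  constructor
  · rintro ⟨hinter, rfl⟩
    rw [Set.union_sdiff_right]
    exact (sdiff_eq_left.mpr (Set.disjoint_iff_inter_eq_empty.mpr hinter)).symm
  · rintro rfl
    exact ⟨Set.sdiff_inter_self, Set.sdiff_union_of_subset h⟩

lemma ramOp_isSome_iff {a b : RAM} :
    (ramOp a b).isSome ↔ Disjoint (ramDom a) (ramDom b) := by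
  have hdisj : Disjoint (ramDom a) (ramDom b) ↔ ∀ x, a.1 x = none ∨ b.1 x = none := by
    simp only [Set.disjoint_left, ramDom, Set.mem_ofPred_eq, ← or_iff_not_imp_left, not_not]
  rw [hdisj, ramOp]
  split_ifs with h
  · exact iff_of_true rfl h
  · exact iff_of_false Bool.false_ne_true h

lemma ramDom_of_ramOp_eq_some {a b c : RAM} (h : ramOp a b = some c) :
    ramDom c = ramDom a ∪ ramDom b := by
  unfold ramOp at h
  split_ifs at h
  cases h
  ext x
  simp only [ramDom, ramFun, Set.mem_ofPred_eq, Set.mem_union]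
  cases a.1 x <;> simp

def ramSingleton (x : ℕ+) (v : ℤ) : RAM :=
  ⟨fun y => if y = x then some v else none,
    (Set.finite_singleton x).subset fun y hy => by by_contra h; simp_all⟩

lemma ramDom_ramSingleton (x : ℕ+) (v : ℤ) : ramDom (ramSingleton x v) = {x} := by
  ext y
  by_cases h : y = x <;> simp [ramDom, ramSingleton, h]

lemma footRam_eq_setOf (σ : RAM) : footRam σ = {σ' | ramDom σ' = ramDom σ} := by
  ext σ'
  simp only [footRam, Set.mem_ofPred_eq, ramOp_isSome_iff]
  refine ⟨fun h => Set.ext fun x => ?_, fun h _ => by rw [h]⟩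
  simpa [ramDom_ramSingleton, Set.disjoint_singleton_right, not_iff_not] using h (ramSingleton x 0)

lemma footRam_eq_footRam_iff {σ σ' : RAM} : footRam σ = footRam σ' ↔ ramDom σ = ramDom σ' :=
  ⟨fun h => by
    have : σ ∈ footRam σ' := h ▸ by simp [footRam_eq_setOf]
    simpa [footRam_eq_setOf] using this,
    fun h => by simp only [footRam_eq_setOf, h]⟩

open Classical in
noncomputable def ramRestrict (σ : RAM) (s : Set ℕ+) : RAM :=
  ⟨fun x => if x ∈ s then σ.1 x else none,
    σ.2.subset fun x hx => by by_cases h : x ∈ s <;> simp_all⟩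

lemma ramDom_ramRestrict (σ : RAM) (s : Set ℕ+) : ramDom (ramRestrict σ s) = ramDom σ ∩ s := by
  ext x
  by_cases h : x ∈ s <;> simp [ramDom, ramRestrict, h]

lemma ramOp_ramRestrict_compl (σ : RAM) (s : Set ℕ+) :
    ramOp (ramRestrict σ s) (ramRestrict σ sᶜ) = some σ := by
  have hdisj : ∀ x, (ramRestrict σ s).1 x = none ∨ (ramRestrict σ sᶜ).1 x = none := by
    intro x
    by_cases h : x ∈ s <;> simp [ramRestrict, h]
  rw [ramOp, if_pos hdisj]
  congr 1
  refine Subtype.ext (funext fun x => ?_)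
  by_cases h : x ∈ s <;> simp [ramFun, ramRestrict, h]

theorem fpSubRam_footRam_iff {σ1 σ2 : RAM} {l : Set RAM} :
    FpSubRam (footRam σ1) (footRam σ2) l ↔
      ramDom σ1 ⊆ ramDom σ2 ∧ l = {σ | ramDom σ = ramDom σ2 \ ramDom σ1} := by
  constructor
  · rintro ⟨ρ1, ρ2, ρ, h1, h2, hop, rfl⟩
    rw [footRam_eq_footRam_iff] at h1 h2
    have hdisj : Disjoint (ramDom ρ1) (ramDom ρ) := ramOp_isSome_iff.mp (by simp [hop])
    have hunion := ramDom_of_ramOp_eq_some hop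
    refine ⟨h1 ▸ h2 ▸ hunion ▸ Set.subset_union_left, ?_⟩
    rw [footRam_eq_setOf, ← h1, ← h2, hunion, Set.union_sdiff_cancel_left hdisj.le_bot]
  · rintro ⟨hsub, rfl⟩
    refine ⟨ramRestrict σ2 (ramDom σ1), σ2, ramRestrict σ2 (ramDom σ1)ᶜ,
      ?_, rfl, ramOp_ramRestrict_compl σ2 _, ?_⟩
    · rw [footRam_eq_footRam_iff, ramDom_ramRestrict, Set.inter_eq_right.mpr hsub]
    · rw [footRam_eq_setOf, ramDom_ramRestrict, Set.sdiff_eq]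

/-- in `RAM`, if `dom σ1 ⊆ dom σ2` then `δ(σ2) \\ δ(σ1)` is
defined and equals `{σ | dom σ ∩ dom σ1 = ∅ ∧ dom σ ∪ dom σ1 = dom σ2}`;
if `dom σ1 ⊄ dom σ2` then `δ(σ2) \\ δ(σ1)` is undefined. -/
theorem ram_fpSub_description (σ1 σ2 : RAM) :
    (ramDom σ1 ⊆ ramDom σ2 →
      FpSubRam (footRam σ1) (footRam σ2)
        {σ | ramDom σ ∩ ramDom σ1 = ∅ ∧ ramDom σ ∪ ramDom σ1 = ramDom σ2} ∧
      ∀ l, FpSubRam (footRam σ1) (footRam σ2) l →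
        l = {σ | ramDom σ ∩ ramDom σ1 = ∅ ∧ ramDom σ ∪ ramDom σ1 = ramDom σ2}) ∧
    (¬ ramDom σ1 ⊆ ramDom σ2 → ¬ ∃ l, FpSubRam (footRam σ1) (footRam σ2) l) := by
  simp only [fpSubRam_footRam_iff]
  refine ⟨fun hsub => ?_, fun hnsub ⟨_, hsub, _⟩ => hnsub hsub⟩
  have hset : {σ | ramDom σ ∩ ramDom σ1 = ∅ ∧ ramDom σ ∪ ramDom σ1 = ramDom σ2} =
      {σ | ramDom σ = ramDom σ2 \ ramDom σ1} :=
    Set.ext fun σ => Set.inter_eq_empty_and_union_eq_iff_eq_sdiff hsub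
  exact ⟨⟨hsub, hset⟩, fun l ⟨_, hl⟩ => hl.trans hset.symm⟩
end

section
/- The transformer f : RAM → P(RAM) ∪ {⊤} defined by: f(σ) = ⊤ if 1 ∉ dom σ; f(σ) = {σ[1 : 0]} if 1 ∈ dom σ and 2 ∈ dom σ; and f(σ) = {σ[1 : 0], σ[1 : 1]} if 1 ∈ dom σ and 2 ∉ dom σ, is local but not strongly local: f(σ1 * σ2) ⊆ f(σ1) * {σ2} holds whenever σ1 * σ2 is defined and f(σ1) ≠ ⊤, but there exist σ1, σ2 (for instance σ1 = [1 : 0] and σ2 = [2 : 0]) with σ1 * σ2 defined, f(σ1) ≠ ⊤, and f(σ1 * σ2) ≠ f(σ1) * {σ2}. -/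
/-- `σ[x : y]`: the heap `σ` updated to map `x` to `y`. -/
def ramUpdate (σ : RAM) (x : ℕ+) (v : ℤ) : RAM :=
  ⟨fun y => if y = x then some v else σ.1 y, by
    apply Set.Finite.subset (σ.2.union (Set.finite_singleton x))
    intro y hy
    simp only [Set.mem_setOf_eq, Set.mem_union, Set.mem_singleton_iff] at hy ⊢
    by_cases h : y = x
    · right; exact h
    · left; simpa [h] using hy⟩

/-- Pointwise lifting of `*` to sets of states of `RAM`. -/
def setOpRam (p q : Set RAM) : Set RAM :=
  {σ | ∃ σ1 ∈ p, ∃ σ2 ∈ q, ramOp σ1 σ2 = some σ}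

/-- A transformer on `RAM` (with `none` playing the role of `⊤`) is strongly
local if `f(σ1 * σ2) = f(σ1) * {σ2}` whenever `σ1 * σ2` is defined and
`f(σ1) ≠ ⊤`. -/
def StrongLocalRam (f : RAM → Option (Set RAM)) : Prop :=
  ∀ σ1 σ2 σ12 p, ramOp σ1 σ2 = some σ12 → f σ1 = some p →
    f σ12 = some (setOpRam p {σ2})

/-- A transformer on `RAM` is local if `f(σ1 * σ2) ⊆ f(σ1) * {σ2}` whenever
`σ1 * σ2` is defined and `f(σ1) ≠ ⊤`. -/
def LocalRam (f : RAM → Option (Set RAM)) : Prop :=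
  ∀ σ1 σ2 σ12 p, ramOp σ1 σ2 = some σ12 → f σ1 = some p →
    ∃ q, f σ12 = some q ∧ q ⊆ setOpRam p {σ2}

open Classical in
/-- The transformer that: faults if cell `1` is not allocated; writes `0` to
cell `1` if cell `2` is allocated; and nondeterministically writes `0` or `1`
to cell `1` if cell `2` is not allocated. -/
noncomputable def sneakyF (σ : RAM) : Option (Set RAM) :=
  if σ.1 1 = none then none
  else if σ.1 2 ≠ none then some {ramUpdate σ 1 0}
  else some {ramUpdate σ 1 0, ramUpdate σ 1 1}


/-!
`sneakyF` writes to cell `1` a value drawn from a set that depends only on whether cell `2` is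
allocated, and that set can only shrink as the heap grows, so `sneakyF` is local. Framing in
cell `2` removes the option of writing `1`, so the equality demanded by strong locality fails.
-/

lemma ramOp_eq_some {σ1 σ2 σ12 : RAM} (h : ramOp σ1 σ2 = some σ12) :
    (∀ x, σ1.1 x = none ∨ σ2.1 x = none) ∧ σ12.1 = ramFun σ1 σ2 := by
  unfold ramOp at h
  split_ifs at h with hd
  cases h
  exact ⟨hd, rfl⟩

lemma ramOp_of_disjoint {σ1 σ2 : RAM} (hd : ∀ x, σ1.1 x = none ∨ σ2.1 x = none) :
    ramOp σ1 σ2 = some ⟨ramFun σ1 σ2, ramFun_finite σ1 σ2⟩ :=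
  if_pos hd

lemma ramOp_ne_none_of_left {σ1 σ2 σ12 : RAM} (h : ramOp σ1 σ2 = some σ12) {x : ℕ+}
    (hx : σ1.1 x ≠ none) : σ12.1 x ≠ none := by
  rw [(ramOp_eq_some h).2, ramFun]
  cases h1 : σ1.1 x <;> simp_all

lemma ramOp_ne_none_of_right {σ1 σ2 σ12 : RAM} (h : ramOp σ1 σ2 = some σ12) {x : ℕ+}
    (hx : σ2.1 x ≠ none) : σ12.1 x ≠ none := by
  rw [(ramOp_eq_some h).2, ramFun]
  cases h1 : σ1.1 x <;> simp_all

lemma ramOp_ramUpdate_left {σ1 σ2 σ12 : RAM} (h : ramOp σ1 σ2 = some σ12) {x : ℕ+}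
    (hx : σ2.1 x = none) (v : ℤ) :
    ramOp (ramUpdate σ1 x v) σ2 = some (ramUpdate σ12 x v) := by
  obtain ⟨hd, hf⟩ := ramOp_eq_some h
  have hd' : ∀ y, (ramUpdate σ1 x v).1 y = none ∨ σ2.1 y = none := by
    intro y
    by_cases hy : y = x
    · exact .inr (hy ▸ hx)
    · simpa [ramUpdate, hy] using hd y
  rw [ramOp_of_disjoint hd']
  refine congrArg some (Subtype.ext (funext fun y => ?_))
  by_cases hy : y = x <;> simp [ramFun, ramUpdate, hy, hf]

lemma image_ramUpdate_subset_setOpRam {σ1 σ2 σ12 : RAM} (h : ramOp σ1 σ2 = some σ12)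
    {x : ℕ+} (hx : σ2.1 x = none) (S : Set ℤ) :
    (ramUpdate σ12 x ·) '' S ⊆ setOpRam ((ramUpdate σ1 x ·) '' S) {σ2} := by
  rintro _ ⟨v, hv, rfl⟩
  exact ⟨_, ⟨v, hv, rfl⟩, σ2, rfl, ramOp_ramUpdate_left h hx v⟩

def sneakyValues (σ : RAM) : Set ℤ := if σ.1 2 = none then {0, 1} else {0}

lemma sneakyF_of_ne_none {σ : RAM} (h : σ.1 1 ≠ none) :
    sneakyF σ = some ((ramUpdate σ 1 ·) '' sneakyValues σ) := by
  by_cases h2 : σ.1 2 = none <;> simp [sneakyF, sneakyValues, h, h2, Set.image_insert_eq]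

lemma sneakyValues_mono {σ1 σ2 σ12 : RAM} (h : ramOp σ1 σ2 = some σ12) :
    sneakyValues σ12 ⊆ sneakyValues σ1 := by
  unfold sneakyValues
  by_cases h2 : σ1.1 2 = none
  · split_ifs <;> simp
  · simp [h2, ramOp_ne_none_of_left h h2]

lemma sneakyF_local : LocalRam sneakyF := by
  intro σ1 σ2 σ12 p h hp
  have h1 : σ1.1 1 ≠ none := fun h1 => by simp [sneakyF, h1] at hp
  rw [sneakyF_of_ne_none h1, Option.some.injEq] at hp
  subst hp
  refine ⟨_, sneakyF_of_ne_none (ramOp_ne_none_of_left h h1), ?_⟩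
  exact (Set.image_mono (sneakyValues_mono h)).trans
    (image_ramUpdate_subset_setOpRam h ((ramOp_eq_some h).1 1 |>.resolve_left h1) _)

lemma sneakyF_ne_setOpRam {σ1 σ2 σ12 : RAM} (h : ramOp σ1 σ2 = some σ12)
    (h1 : σ1.1 1 ≠ none) (h2 : σ1.1 2 = none) (h2' : σ2.1 2 ≠ none) :
    sneakyF σ12 ≠ some (setOpRam ((ramUpdate σ1 1 ·) '' sneakyValues σ1) {σ2}) := by
  intro heq
  have h1_mem : ramUpdate σ12 1 1 ∈ setOpRam ((ramUpdate σ1 1 ·) '' sneakyValues σ1) {σ2} :=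
    image_ramUpdate_subset_setOpRam h ((ramOp_eq_some h).1 1 |>.resolve_left h1) _
      ⟨1, by simp [sneakyValues, h2], rfl⟩
  rw [sneakyF_of_ne_none (ramOp_ne_none_of_left h h1), Option.some.injEq,
    sneakyValues, if_neg (ramOp_ne_none_of_right h h2')] at heq
  rw [← heq] at h1_mem
  obtain ⟨_, rfl, h01⟩ := h1_mem
  simpa [ramUpdate] using congrArg (fun σ : RAM => σ.1 1) h01

/-- the transformer `sneakyF` is local but not strongly local:
for `σ1 = [1 : 0]` and `σ2 = [2 : 0]`, `σ1 * σ2` is defined, `sneakyF σ1 ≠ ⊤`,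
and `sneakyF (σ1 * σ2) ≠ sneakyF σ1 * {σ2}`. -/
theorem sneakyF_local_not_strongLocal :
    LocalRam sneakyF ∧
    ∃ σ1 σ2 σ12 p, σ1 = ramUpdate ramEmpty 1 0 ∧ σ2 = ramUpdate ramEmpty 2 0 ∧
      ramOp σ1 σ2 = some σ12 ∧ sneakyF σ1 = some p ∧
      sneakyF σ12 ≠ some (setOpRam p {σ2}) := by
  refine ⟨sneakyF_local, ?_⟩
  set σ1 := ramUpdate ramEmpty 1 0
  set σ2 := ramUpdate ramEmpty 2 0
  have hd : ∀ x, σ1.1 x = none ∨ σ2.1 x = none := by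
    intro x
    by_cases hx : x = 1 <;> simp [σ1, σ2, ramUpdate, ramEmpty, hx]
  obtain ⟨σ12, h⟩ : ∃ σ12, ramOp σ1 σ2 = some σ12 := ⟨_, ramOp_of_disjoint hd⟩
  have h1 : σ1.1 1 ≠ none := by simp [σ1, ramUpdate]
  refine ⟨σ1, σ2, σ12, _, rfl, rfl, h, sneakyF_of_ne_none h1, sneakyF_ne_setOpRam h h1 ?_ ?_⟩
  · simp [σ1, ramUpdate, ramEmpty]
  · simp [σ2, ramUpdate]
end
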